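/- Fix n ≥ 1 and real numbers x₁,…,x_n, x₁',…,x_n' ∈ {0,1}. For s ∈ {0,1}^n, let δ(s) = |(1/n)·Σ_i (if s_i = 0 then x_i else x_i') − (1/n)·Σ_i (if s_i = 0 then x_i' else x_i)|. Then viewing s as uniformly random on {0,1}^n, the probability that δ(s) > ε is at most |c|/(n²ε²) where c = {i : x_i ≠ x_i'}; in particular it is at most 1/(nε²) ≤ ε⁻²·n⁻¹. -/
import Mathlib



open Finset

private def sgn {n : ℕ} (s : Fin n → Bool) (i : Fin n) : ℝ := if s i then -1 else 1

private lemma orth {n : ℕ} (i j : Fin n) :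
    ∑ s : Fin n → Bool, sgn s i * sgn s j = if i = j then (2:ℝ)^n else 0 := by
  split_ifs with h
  · subst h
    have h1 : ∀ s : Fin n → Bool, sgn s i * sgn s i = 1 := by
      intro s; unfold sgn; split_ifs <;> norm_num
    rw [Finset.sum_congr rfl (fun s _ => h1 s), Finset.sum_const, Finset.card_univ]
    simp
  · refine Finset.sum_involution (fun s _ => Function.update s i (!(s i))) ?_ ?_
      (fun s _ => Finset.mem_univ _) ?_
    · intro s _
      have h1 : sgn (Function.update s i (!(s i))) i = - sgn s i := by
        unfold sgn; simp [Function.update_self]; cases s i <;> simp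
      have h2 : sgn (Function.update s i (!(s i))) j = sgn s j := by
        unfold sgn; rw [Function.update_of_ne (Ne.symm h)]
      rw [h1, h2]; ring
    · intro s _ _
      intro hc
      have := congrFun hc i
      simp [Function.update_self] at this
    · intro s _
      funext k
      by_cases hk : k = i
      · subst hk; simp [Function.update_self]
      · simp [Function.update_of_ne hk]

open scoped Classical in
/-- Chebyshev/symmetrization estimate: flipping each pair (x_i, x_i') with independent
uniform signs, the probability that the two empirical frequencies differ by more than ε
is at most |c|/(n²ε²), and in particular at most 1/(nε²). -/
theorem stmt9 (n : ℕ) (hn : 0 < n) (x x' : Fin n → ℝ)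
    (hx : ∀ i, x i = 0 ∨ x i = 1) (hx' : ∀ i, x' i = 0 ∨ x' i = 1)
    (ε : ℝ) (hε : 0 < ε) :
    (((Finset.univ.filter fun s : Fin n → Bool =>
        ε < |(∑ i, if s i then x' i else x i) / n - (∑ i, if s i then x i else x' i) / n|).card
          : ℝ) / 2 ^ n
      ≤ ((Finset.univ.filter fun i : Fin n => x i ≠ x' i).card : ℝ) / (n ^ 2 * ε ^ 2)) ∧
    (((Finset.univ.filter fun s : Fin n → Bool =>
        ε < |(∑ i, if s i then x' i else x i) / n - (∑ i, if s i then x i else x' i) / n|).card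
          : ℝ) / 2 ^ n
      ≤ 1 / (n * ε ^ 2)) := by
  classical
  set d : Fin n → ℝ := fun i => x i - x' i with hd
  set bad := (Finset.univ.filter fun s : Fin n → Bool =>
      ε < |(∑ i, if s i then x' i else x i) / n - (∑ i, if s i then x i else x' i) / n|) with hbad
  set c := (Finset.univ.filter fun i : Fin n => x i ≠ x' i) with hc
  have hnR : (0:ℝ) < n := by exact_mod_cast hn
  -- rewrite the difference
  have hdiff : ∀ s : Fin n → Bool,
      (∑ i, if s i then x' i else x i) / n - (∑ i, if s i then x i else x' i) / n
        = (∑ i, sgn s i * d i) / n := by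
    intro s
    rw [div_sub_div_same, ← Finset.sum_sub_distrib]
    congr 1
    apply Finset.sum_congr rfl
    intro i _
    unfold sgn
    by_cases h : s i <;> simp [h, hd] <;> ring
  -- squared sums
  have hsq : ∀ i, d i ^ 2 = if x i ≠ x' i then 1 else 0 := by
    intro i
    rcases hx i with h1 | h1 <;> rcases hx' i with h2 | h2 <;>
      simp [hd, h1, h2] <;> norm_num
  have hdsum : ∑ i, d i ^ 2 = (c.card : ℝ) := by
    rw [Finset.sum_congr rfl (fun i _ => hsq i)]
    rw [Finset.sum_ite, Finset.sum_const, Finset.sum_const]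
    simp [hc]
  have key : ∑ s : Fin n → Bool, (∑ i, sgn s i * d i)^2 = 2^n * (c.card : ℝ) := by
    have expand : ∀ s : Fin n → Bool, (∑ i, sgn s i * d i)^2
        = ∑ i, ∑ j, (sgn s i * sgn s j) * (d i * d j) := by
      intro s
      rw [sq, Finset.sum_mul_sum]
      apply Finset.sum_congr rfl; intro i _
      apply Finset.sum_congr rfl; intro j _
      ring
    calc ∑ s : Fin n → Bool, (∑ i, sgn s i * d i)^2
        = ∑ s : Fin n → Bool, ∑ i, ∑ j, (sgn s i * sgn s j) * (d i * d j) := by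
          exact Finset.sum_congr rfl fun s _ => expand s
      _ = ∑ i, ∑ j, ∑ s : Fin n → Bool, (sgn s i * sgn s j) * (d i * d j) := by
          rw [Finset.sum_comm]
          exact Finset.sum_congr rfl fun i _ => Finset.sum_comm
      _ = ∑ i, ∑ j, (if i = j then (2:ℝ)^n else 0) * (d i * d j) := by
          apply Finset.sum_congr rfl; intro i _
          apply Finset.sum_congr rfl; intro j _
          rw [← Finset.sum_mul, orth]
      _ = ∑ i : Fin n, 2^n * d i ^ 2 := by
          apply Finset.sum_congr rfl; intro i _
          simp [ite_mul, Finset.sum_ite_eq]; ring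
      _ = 2^n * (c.card : ℝ) := by rw [← Finset.mul_sum, hdsum]
  -- Chebyshev
  have cheb : (bad.card : ℝ) * (ε^2 * n^2) ≤ 2^n * (c.card : ℝ) := by
    rw [← key]
    calc (bad.card : ℝ) * (ε^2 * n^2) = ∑ _s ∈ bad, ε^2 * n^2 := by
          rw [Finset.sum_const, nsmul_eq_mul]
      _ ≤ ∑ s ∈ bad, (∑ i, sgn s i * d i)^2 := by
          apply Finset.sum_le_sum
          intro s hs
          rw [hbad, Finset.mem_filter] at hs
          have h1 : ε < |(∑ i, sgn s i * d i)| / n := by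
            have := hs.2
            rwa [hdiff s, abs_div, abs_of_pos hnR] at this
          have h2 : ε * n < |(∑ i, sgn s i * d i)| := by
            rw [lt_div_iff₀ hnR] at h1; exact h1
          have h3 : (ε * n)^2 ≤ (∑ i, sgn s i * d i)^2 := by
            rw [← sq_abs (∑ i, sgn s i * d i)]
            apply pow_le_pow_left₀ (by positivity) h2.le
          calc ε^2 * n^2 = (ε * n)^2 := by ring
            _ ≤ _ := h3
      _ ≤ ∑ s : Fin n → Bool, (∑ i, sgn s i * d i)^2 := by
          apply Finset.sum_le_sum_of_subset_of_nonneg (Finset.filter_subset _ _)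
          intro s _ _; positivity
  have h2n : (0:ℝ) < 2^n := by positivity
  have hden : (0:ℝ) < (n:ℝ)^2 * ε^2 := by positivity
  constructor
  · rw [div_le_div_iff₀ h2n hden]
    calc (bad.card : ℝ) * ((n:ℝ)^2 * ε^2) = (bad.card : ℝ) * (ε^2 * (n:ℝ)^2) := by ring
      _ ≤ 2^n * (c.card : ℝ) := cheb
      _ = (c.card : ℝ) * 2^n := by ring
  · have hcn : (c.card : ℝ) ≤ n := by
      have := Finset.card_filter_le (Finset.univ : Finset (Fin n)) (fun i => x i ≠ x' i)
      have : c.card ≤ n := by simpa [hc] using this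
      exact_mod_cast this
    rw [div_le_div_iff₀ h2n (by positivity : (0:ℝ) < (n:ℝ) * ε^2)]
    have h4 : (bad.card : ℝ) * (ε^2 * (n:ℝ)^2) ≤ 2^n * n :=
      cheb.trans (by nlinarith [h2n.le, hcn])
    nlinarith [h4, hnR]
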